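/- One-step contraction for convex stochastic optimization under standard Lipschitz continuity: Let x ∈ ℝⁿ be fixed, γ > 0, and let x⁺(ξ) = argmin_y { f_x(y,ξ) + ω(y) + (γ/2)‖y − x‖² } for ξ ∼ Ξ. Then for any optimal solution x* of min ψ, E_ξ[‖x⁺(ξ) − x*‖²] ≤ ‖x − x*‖² − (2/γ)[ψ(x) − ψ(x*)] + (L_f + L_ω)²/γ². -/

import Mathlib

/-!
The regularized model `y ↦ f_x(y, ξ) + ω(y) + γ/2 ‖y - x‖²` is `γ`-strongly convex, so its
minimizer `x⁺` beats every `y` by `γ/2 ‖y - x⁺‖²`; taking `y = x*` gives a three-point inequality.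
The Lipschitz bounds control the model decrease from `x` to `x⁺` by `(L_f(ξ) + L_ω) ‖x - x⁺‖`,
and Young's inequality absorbs this into `γ/2 ‖x⁺ - x‖²` up to `(L_f(ξ) + L_ω)² / (2γ)`.
In expectation the model gap becomes at least `ψ(x) - ψ(x*)` (unbiased at `x`, below `f` at
`x*`), and `E[L_f(ξ)] ≤ L_f` by Jensen bounds `E[(L_f(ξ) + L_ω)²]` by `(L_f + L_ω)²`.
-/

open MeasureTheory ProbabilityTheory Set Filter Topology
open scoped RealInnerProductSpace

section StrongConvexity

variable {E : Type*} [NormedAddCommGroup E]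

section NormedSpace

variable [NormedSpace ℝ E] {s : Set E} {m : ℝ}

lemma ConvexOn.add_strongConvexOn {f g : E → ℝ} (hf : ConvexOn ℝ s f)
    (hg : StrongConvexOn s m g) : StrongConvexOn s m (f + g) := by
  have h := hf.uniformConvexOn_zero.add hg
  rwa [zero_add] at h

lemma StrongConvexOn.add_sq_norm_sub_le_of_isMinOn {f : E → ℝ} {a y : E}
    (hf : StrongConvexOn s m f) (hmin : IsMinOn f s a) (ha : a ∈ s) (hy : y ∈ s) :
    f a + m / 2 * ‖y - a‖ ^ 2 ≤ f y := by
  have hseg : ∀ t ∈ Ioo (0 : ℝ) 1, f a + (1 - t) * (m / 2 * ‖y - a‖ ^ 2) ≤ f y := by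
    rintro t ⟨ht0, ht1⟩
    have hconv := hf.2 ha hy (sub_nonneg.2 ht1.le) ht0.le (sub_add_cancel 1 t)
    have hle : f a ≤ f _ := hmin (hf.1 ha hy (sub_nonneg.2 ht1.le) ht0.le (sub_add_cancel 1 t))
    rw [norm_sub_rev] at hconv
    simp only [smul_eq_mul] at hconv
    have : t * (f a + (1 - t) * (m / 2 * ‖y - a‖ ^ 2)) ≤ t * f y := by linarith
    exact le_of_mul_le_mul_left this ht0
  have hlim : Tendsto (fun t : ℝ => f a + (1 - t) * (m / 2 * ‖y - a‖ ^ 2)) (𝓝[>] 0)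
      (𝓝 (f a + m / 2 * ‖y - a‖ ^ 2)) :=
    (Continuous.tendsto' (by fun_prop) 0 _ (by simp)).mono_left nhdsWithin_le_nhds
  exact le_of_tendsto hlim (eventually_of_mem (Ioo_mem_nhdsGT one_pos) hseg)

end NormedSpace

variable [InnerProductSpace ℝ E]

lemma strongConvexOn_univ_mul_sq_norm_sub (m : ℝ) (x : E) :
    StrongConvexOn univ m fun y => m / 2 * ‖y - x‖ ^ 2 := by
  rw [strongConvexOn_iff_convex]
  have haffine : (fun y : E => m / 2 * ‖y - x‖ ^ 2 - m / 2 * ‖y‖ ^ 2)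
      = fun y => ((-m) • innerₛₗ ℝ x) y + m / 2 * ‖x‖ ^ 2 := by
    ext y
    simp only [norm_sub_sq_real, real_inner_comm, LinearMap.smul_apply, innerₛₗ_apply_apply,
      smul_eq_mul]
    ring
  rw [haffine]
  exact (LinearMap.convexOn _ convex_univ).add_const _

lemma sq_norm_sub_le_of_isMinOn_add_sq_norm_sub {g : E → ℝ} {γ L : ℝ} {x a : E}
    (hg : ConvexOn ℝ univ g) (hγ : 0 < γ)
    (hmin : IsMinOn (fun y => g y + γ / 2 * ‖y - x‖ ^ 2) univ a)
    (hdescent : g x - g a ≤ L * ‖x - a‖) (y : E) :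
    ‖a - y‖ ^ 2 ≤ ‖x - y‖ ^ 2 - 2 / γ * (g x - g y) + L ^ 2 / γ ^ 2 := by
  have hthree := (hg.add_strongConvexOn (strongConvexOn_univ_mul_sq_norm_sub γ x)
    ).add_sq_norm_sub_le_of_isMinOn hmin (mem_univ a) (mem_univ y)
  have hyoung : L * ‖x - a‖ ≤ γ / 2 * ‖x - a‖ ^ 2 + L ^ 2 / (2 * γ) := by
    have hsq : γ / 2 * ‖x - a‖ ^ 2 + L ^ 2 / (2 * γ) - L * ‖x - a‖
        = (γ * ‖x - a‖ - L) ^ 2 / (2 * γ) := by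
      field_simp
      ring
    rw [← sub_nonneg, hsq]
    positivity
  simp only [Pi.add_apply] at hthree
  rw [norm_sub_rev x a, norm_sub_rev y a, norm_sub_rev y x] at *
  have hscaled : γ / 2 * ‖a - y‖ ^ 2 ≤ γ / 2 * ‖x - y‖ ^ 2 - (g x - g y) + L ^ 2 / (2 * γ) := by
    linarith
  calc ‖a - y‖ ^ 2 = 2 / γ * (γ / 2 * ‖a - y‖ ^ 2) := by field_simp
    _ ≤ 2 / γ * (γ / 2 * ‖x - y‖ ^ 2 - (g x - g y) + L ^ 2 / (2 * γ)) := by gcongr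
    _ = ‖x - y‖ ^ 2 - 2 / γ * (g x - g y) + L ^ 2 / γ ^ 2 := by field_simp

end StrongConvexity

section SecondMoment

variable {Ω : Type*} [MeasurableSpace Ω] {μ : Measure Ω}

lemma memLp_two_of_nonneg_of_integrable_sq {X : Ω → ℝ} (hX : ∀ ω, 0 ≤ X ω)
    (hX2 : Integrable (fun ω => X ω ^ 2) μ) : MemLp X 2 μ := by
  have hsqrt : X = fun ω => √(X ω ^ 2) := funext fun ω => (Real.sqrt_sq (hX ω)).symm
  have hmeas : AEStronglyMeasurable X μ := by
    rw [hsqrt]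
    exact Real.continuous_sqrt.comp_aestronglyMeasurable hX2.aestronglyMeasurable
  exact (memLp_two_iff_integrable_sq hmeas).2 hX2

lemma integral_add_const_sq_le [IsProbabilityMeasure μ] {X : Ω → ℝ} {a b : ℝ}
    (hX : MemLp X 2 μ) (ha : 0 ≤ a) (hb : 0 ≤ b) (hX2 : ∫ ω, X ω ^ 2 ∂μ ≤ a ^ 2) :
    ∫ ω, (X ω + b) ^ 2 ∂μ ≤ (a + b) ^ 2 := by
  have hint := hX.integrable one_le_two
  have hint2 := hX.integrable_sq
  have hjensen : (∫ ω, X ω ∂μ) ^ 2 ≤ ∫ ω, X ω ^ 2 ∂μ := by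
    have := variance_nonneg X μ
    rw [variance_eq_sub hX] at this
    simpa [sub_nonneg] using this
  have hmean : ∫ ω, X ω ∂μ ≤ a := (abs_le_of_sq_le_sq' (hjensen.trans hX2) ha).2
  have hexpand : ∫ ω, (X ω + b) ^ 2 ∂μ = ∫ ω, X ω ^ 2 ∂μ + 2 * b * ∫ ω, X ω ∂μ + b ^ 2 := by
    have hpoly : ∀ ω, (X ω + b) ^ 2 = X ω ^ 2 + 2 * b * X ω + b ^ 2 := fun ω => by ring
    simp_rw [hpoly]
    rw [integral_add (by fun_prop) (by fun_prop), integral_add (by fun_prop) (by fun_prop),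
      integral_const_mul]
    simp
  rw [hexpand]
  nlinarith

end SecondMoment

theorem convex_one_step_standard_lipschitz_general
    {n : ℕ} {S : Type*} [MeasurableSpace S] (μ : Measure S) [IsProbabilityMeasure μ]
    (f w ψ : EuclideanSpace ℝ (Fin n) → ℝ)
    (fmod : EuclideanSpace ℝ (Fin n) → EuclideanSpace ℝ (Fin n) → S → ℝ)
    (Lfs : S → ℝ) (γ Lf Lw : ℝ)
    -- basic parameter assumptions
    (hγ : 0 < γ) (hLf : 0 ≤ Lf) (hLw : 0 ≤ Lw)
    -- convex composite objective
    (hψdef : ∀ x, ψ x = f x + w x)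
    (hw_conv : ConvexOn ℝ Set.univ w)
    (hw_lip : ∀ x y, |w x - w y| ≤ Lw * ‖x - y‖)
    -- properties of the stochastic model (with τ = 0)
    (hmodel_conv : ∀ x s, ConvexOn ℝ Set.univ (fun y => fmod x y s))
    (hmodel_int : ∀ x y, Integrable (fun s => fmod x y s) μ)
    (hmodel_center : ∀ x, ∫ s, fmod x x s ∂μ = f x)
    (hmodel_under : ∀ x y, ∫ s, fmod x y s ∂μ ≤ f y)
    -- B1: standard Lipschitz continuity of the models
    (hB1 : ∀ x y z s, fmod x y s - fmod x z s ≤ Lfs s * ‖y - z‖)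
    (hLfs_nonneg : ∀ s, 0 ≤ Lfs s)
    (hLfs_int : Integrable (fun s => Lfs s ^ 2) μ)
    (hLfs_bound : ∫ s, Lfs s ^ 2 ∂μ ≤ Lf ^ 2)
    -- an optimal solution
    (xstar : EuclideanSpace ℝ (Fin n))
    -- the current point and the stochastic one-step update
    (x : EuclideanSpace ℝ (Fin n)) (xplus : S → EuclideanSpace ℝ (Fin n))
    (hupdate : ∀ s y,
      fmod x (xplus s) s + w (xplus s) + γ / 2 * ‖xplus s - x‖ ^ 2
        ≤ fmod x y s + w y + γ / 2 * ‖y - x‖ ^ 2)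
    (hint : Integrable (fun s => ‖xplus s - xstar‖ ^ 2) μ) :
    ∫ s, ‖xplus s - xstar‖ ^ 2 ∂μ
      ≤ ‖x - xstar‖ ^ 2 - 2 / γ * (ψ x - ψ xstar) + (Lf + Lw) ^ 2 / γ ^ 2 := by
  have hdescent : ∀ s, fmod x x s + w x - (fmod x (xplus s) s + w (xplus s))
      ≤ (Lfs s + Lw) * ‖x - xplus s‖ := fun s => by
    linarith [hB1 x x (xplus s) s, le_abs_self (w x - w (xplus s)), hw_lip x (xplus s)]
  have hpoint : ∀ s, ‖xplus s - xstar‖ ^ 2 ≤ ‖x - xstar‖ ^ 2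
      - 2 / γ * (fmod x x s + w x - (fmod x xstar s + w xstar)) + (Lfs s + Lw) ^ 2 / γ ^ 2 :=
    fun s => sq_norm_sub_le_of_isMinOn_add_sq_norm_sub ((hmodel_conv x s).add hw_conv) hγ
      (isMinOn_univ_iff.2 (hupdate s)) (hdescent s) xstar
  have hLfs := memLp_two_of_nonneg_of_integrable_sq hLfs_nonneg hLfs_int
  have hLfs_sq := (hLfs.add (memLp_const Lw)).integrable_sq
  have hcenter := hmodel_int x x
  have hstar := hmodel_int x xstar
  have hmono := integral_mono hint (by fun_prop) hpoint
  rw [integral_add (by fun_prop) (by fun_prop), integral_sub (by fun_prop) (by fun_prop),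
    integral_const_mul, integral_sub (by fun_prop) (by fun_prop),
    integral_add (by fun_prop) (by fun_prop), integral_add (by fun_prop) (by fun_prop),
    integral_div] at hmono
  simp only [integral_const, probReal_univ, one_smul, hmodel_center] at hmono
  have hgap : ψ x - ψ xstar ≤ f x + w x - (∫ s, fmod x xstar s ∂μ + w xstar) := by
    rw [hψdef, hψdef]
    linarith [hmodel_under x xstar]
  refine hmono.trans ?_
  gcongr
  exact integral_add_const_sq_le hLfs hLf hLw hLfs_bound

/-- **Lemma D.1** (one-step contraction for convex stochastic optimization under standard
Lipschitz continuity).  `ψ = f + w` is convex (`τ = κ = 0`), `x*` is an optimal solution,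
the models are convex, unbiased at the center, under-approximate `f` in expectation, and
satisfy B1.  For `γ > 0` and `x⁺(ξ)` the minimizer of the regularized model at `x`,
`E_ξ[‖x⁺(ξ) - x*‖²] ≤ ‖x - x*‖² - (2/γ)[ψ(x) - ψ(x*)] + (L_f + L_ω)²/γ²`. -/
theorem convex_one_step_standard_lipschitz
    {n : ℕ} {S : Type*} [MeasurableSpace S] (μ : Measure S) [IsProbabilityMeasure μ]
    (f w ψ : EuclideanSpace ℝ (Fin n) → ℝ)
    (fmod : EuclideanSpace ℝ (Fin n) → EuclideanSpace ℝ (Fin n) → S → ℝ)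
    (Lfs : S → ℝ) (γ Lf Lw : ℝ)
    -- basic parameter assumptions
    (hγ : 0 < γ) (hLf : 0 ≤ Lf) (hLw : 0 ≤ Lw)
    -- convex composite objective
    (hψdef : ∀ x, ψ x = f x + w x)
    (hf_conv : ConvexOn ℝ Set.univ f)
    (hw_conv : ConvexOn ℝ Set.univ w)
    (hw_lip : ∀ x y, |w x - w y| ≤ Lw * ‖x - y‖)
    -- properties of the stochastic model (with τ = 0)
    (hmodel_conv : ∀ x s, ConvexOn ℝ Set.univ (fun y => fmod x y s))
    (hmodel_int : ∀ x y, Integrable (fun s => fmod x y s) μ)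
    (hmodel_center : ∀ x, ∫ s, fmod x x s ∂μ = f x)
    (hmodel_under : ∀ x y, ∫ s, fmod x y s ∂μ ≤ f y)
    -- B1: standard Lipschitz continuity of the models
    (hB1 : ∀ x y z s, fmod x y s - fmod x z s ≤ Lfs s * ‖y - z‖)
    (hLfs_nonneg : ∀ s, 0 ≤ Lfs s)
    (hLfs_int : Integrable (fun s => Lfs s ^ 2) μ)
    (hLfs_bound : ∫ s, Lfs s ^ 2 ∂μ ≤ Lf ^ 2)
    -- an optimal solution
    (xstar : EuclideanSpace ℝ (Fin n)) (hxstar : ∀ y, ψ xstar ≤ ψ y)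
    -- the current point and the stochastic one-step update
    (x : EuclideanSpace ℝ (Fin n)) (xplus : S → EuclideanSpace ℝ (Fin n))
    (hupdate : ∀ s y,
      fmod x (xplus s) s + w (xplus s) + γ / 2 * ‖xplus s - x‖ ^ 2
        ≤ fmod x y s + w y + γ / 2 * ‖y - x‖ ^ 2)
    (hint : Integrable (fun s => ‖xplus s - xstar‖ ^ 2) μ) :
    ∫ s, ‖xplus s - xstar‖ ^ 2 ∂μ
      ≤ ‖x - xstar‖ ^ 2 - 2 / γ * (ψ x - ψ xstar) + (Lf + Lw) ^ 2 / γ ^ 2 :=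
  convex_one_step_standard_lipschitz_general μ f w ψ fmod Lfs γ Lf Lw hγ hLf hLw hψdef hw_conv
    hw_lip hmodel_conv hmodel_int hmodel_center hmodel_under hB1 hLfs_nonneg hLfs_int hLfs_bound
    xstar x xplus hupdate hint
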